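/- Let η > 0, g ∈ W^{2,∞}(ℝ), s₀ ∈ W^{2,∞}(ℝ), x₀ ∈ ℝ, and M₂ > 0. Suppose (s₁, x_{c,1}) and (s₂, x_{c,2}) are two pairs, with each s_i continuous with sup_{t≥0} ‖s_i(t,·)‖_{W^{2,∞}} ≤ M₂ and each x_{c,i} continuous, satisfying for all t ≥ 0 and x ∈ ℝ: x_{c,i}(t) = x₀ − η ∫_0^t ∂_x s_i(τ, x_{c,i}(τ)) dτ and s_i(t,x) = e^{−t}(h_t ∗ s₀)(x) + ∫_0^t e^{−(t−τ)} (h_{t−τ} ∗ g)(x − x_{c,i}(τ)) dτ. Then s₁ = s₂ and x_{c,1} = x_{c,2}. -/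

import Mathlib

open MeasureTheory Real

noncomputable section

/-- The heat kernel `h_t(x) = (4πt)^{-1/2} e^{-x²/(4t)}` (for `t > 0`). -/
def heatKernel (t x : ℝ) : ℝ := (Real.sqrt (4 * Real.pi * t))⁻¹ * Real.exp (-x ^ 2 / (4 * t))

/-- Spatial convolution with the heat kernel: `(h_t ∗ f)(x)`. -/
def heatConv (t : ℝ) (f : ℝ → ℝ) (x : ℝ) : ℝ := ∫ y : ℝ, heatKernel t (x - y) * f y

/-- Membership in `W^{k,∞}(ℝ)` (for the classical functions appearing here):
`C^k` with all derivatives up to order `k` bounded. -/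
def MemW (k : ℕ) (f : ℝ → ℝ) : Prop :=
  ContDiff ℝ k f ∧ ∀ j ≤ k, ∃ C, ∀ x, |iteratedDeriv j f x| ≤ C

/-- The `W^{k,∞}` norm: the sum of the sup norms of the derivatives up to order `k`. -/
def WNorm (k : ℕ) (f : ℝ → ℝ) : ℝ :=
  ∑ j ∈ Finset.range (k + 1), ⨆ x : ℝ, |iteratedDeriv j f x|

/-!
Subtracting the two mild formulas, the heat part of the data cancels and `s₁(t) - s₂(t)` is a
difference of two Duhamel terms. An increment `x ↦ x + h` commutes with the Duhamel term, and
`y ↦ g (y + h) - g y` is `‖g‖_{W^{2,∞}} |h|`-Lipschitz; neither convolution with the heat kernel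
(a probability density) nor the weights `e^{-(t-τ)} ≤ 1` increases Lipschitz constants, so
`|∂ₓs₁(t) - ∂ₓs₂(t)| ≤ ‖g‖_{W^{2,∞}} ∫₀ᵗ |x_{c,1} - x_{c,2}|`. Combined with the bound `M₂` on
`∂²ₓsᵢ`, the centre equations give `δ(u) ≤ K ∫₀ᵘ δ` on `[0, T]` for `δ = |x_{c,1} - x_{c,2}|`,
hence `δ = 0` by Grönwall, and then the two mild formulas coincide.
-/

open Set Filter

theorem heatKernel_nonneg (t x : ℝ) : 0 ≤ heatKernel t x := by
  unfold heatKernel; positivity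

theorem norm_heatKernel_mul_le {t w y C : ℝ} (hy : |y| ≤ C) :
    ‖heatKernel t w * y‖ ≤ heatKernel t w * C := by
  rw [norm_mul, Real.norm_of_nonneg (heatKernel_nonneg t w), Real.norm_eq_abs]
  exact mul_le_mul_of_nonneg_left hy (heatKernel_nonneg t w)

theorem heatKernel_of_nonpos {t : ℝ} (ht : t ≤ 0) (x : ℝ) : heatKernel t x = 0 := by
  simp [heatKernel, Real.sqrt_eq_zero_of_nonpos (by nlinarith [Real.pi_pos] : 4 * π * t ≤ 0)]

theorem heatKernel_eq_mul_exp (t x : ℝ) :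
    heatKernel t x = (√(4 * π * t))⁻¹ * exp (-(4 * t)⁻¹ * x ^ 2) := by
  rw [heatKernel, neg_div, div_eq_inv_mul, neg_mul]

theorem integrable_heatKernel (t : ℝ) : Integrable (heatKernel t) := by
  rcases le_or_gt t 0 with ht | ht
  · rw [show heatKernel t = 0 from funext (heatKernel_of_nonpos ht)]
    exact integrable_zero _ _ _
  · rw [funext (heatKernel_eq_mul_exp t)]
    exact (integrable_exp_neg_mul_sq (by positivity)).const_mul _

theorem integral_heatKernel {t : ℝ} (ht : 0 < t) : ∫ x, heatKernel t x = 1 := by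
  simp only [heatKernel_eq_mul_exp, integral_const_mul, integral_gaussian]
  rw [show π / (4 * t)⁻¹ = 4 * π * t by field_simp]
  exact inv_mul_cancel₀ (Real.sqrt_pos.2 (by positivity)).ne'

theorem heatConv_eq_integral (t : ℝ) (f : ℝ → ℝ) (x : ℝ) :
    heatConv t f x = ∫ w, heatKernel t w * f (x - w) := by
  rw [heatConv, ← integral_sub_left_eq_self _ volume x]
  simp only [sub_sub_cancel]

theorem heatConv_of_nonpos {t : ℝ} (ht : t ≤ 0) (f : ℝ → ℝ) (x : ℝ) : heatConv t f x = 0 := by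
  simp [heatConv, heatKernel_of_nonpos ht]

theorem measurable_heatConv {f : ℝ → ℝ} (hf : Measurable f) :
    Measurable fun p : ℝ × ℝ => heatConv p.1 f p.2 := by
  refine (StronglyMeasurable.integral_prod_right' (f := fun q : (ℝ × ℝ) × ℝ =>
    heatKernel q.1.1 (q.1.2 - q.2) * f q.2) ?_).measurable
  unfold heatKernel
  fun_prop

section bounded

variable {f : ℝ → ℝ} {C : ℝ}

theorem integrable_heatKernel_mul (hf : Measurable f) (hC : ∀ x, |f x| ≤ C) (t x : ℝ) :
    Integrable fun w => heatKernel t w * f (x - w) := by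
  refine ((integrable_heatKernel t).mul_const C).mono'
    ((integrable_heatKernel t).aestronglyMeasurable.mul
      (hf.comp (measurable_const.sub measurable_id)).aestronglyMeasurable)
    (ae_of_all _ fun w => norm_heatKernel_mul_le (hC _))

theorem abs_heatConv_le (hC : ∀ x, |f x| ≤ C) (t x : ℝ) : |heatConv t f x| ≤ C := by
  rcases le_or_gt t 0 with ht | ht
  · rw [heatConv_of_nonpos ht, abs_zero]
    exact (abs_nonneg _).trans (hC 0)
  calc |heatConv t f x| ≤ ∫ w, heatKernel t w * C := by
        rw [heatConv_eq_integral, ← Real.norm_eq_abs]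
        exact norm_integral_le_of_norm_le ((integrable_heatKernel t).mul_const C)
          (ae_of_all _ fun w => norm_heatKernel_mul_le (hC _))
    _ = C := by rw [integral_mul_const, integral_heatKernel ht, one_mul]

theorem heatConv_add_sub (hf : Measurable f) (hC : ∀ x, |f x| ≤ C) (t x h : ℝ) :
    heatConv t f (x + h) - heatConv t f x = heatConv t (fun y => f (y + h) - f y) x := by
  simp only [heatConv_eq_integral]
  rw [← integral_sub (integrable_heatKernel_mul hf hC t _) (integrable_heatKernel_mul hf hC t _)]
  simp only [mul_sub, add_sub_right_comm]

theorem abs_heatConv_sub_le (hf : Measurable f) (hC : ∀ x, |f x| ≤ C) {K : ℝ}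
    (hK : ∀ a b, |f a - f b| ≤ K * |a - b|) (t x y : ℝ) :
    |heatConv t f x - heatConv t f y| ≤ K * |x - y| := by
  have hK₀ : 0 ≤ K := by simpa using (abs_nonneg _).trans (hK 1 0)
  rcases le_or_gt t 0 with ht | ht
  · simp only [heatConv_of_nonpos ht, sub_self, abs_zero]
    positivity
  calc |heatConv t f x - heatConv t f y| ≤ ∫ w, heatKernel t w * (K * |x - y|) := by
        rw [heatConv_eq_integral, heatConv_eq_integral, ← integral_sub
          (integrable_heatKernel_mul hf hC t x) (integrable_heatKernel_mul hf hC t y),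
          ← Real.norm_eq_abs]
        refine norm_integral_le_of_norm_le ((integrable_heatKernel t).mul_const _)
          (ae_of_all _ fun w => ?_)
        rw [← mul_sub]
        exact norm_heatKernel_mul_le (by simpa using hK (x - w) (y - w))
    _ = K * |x - y| := by rw [integral_mul_const, integral_heatKernel ht, one_mul]

end bounded

theorem abs_sub_le_of_abs_deriv_le {f : ℝ → ℝ} {B : ℝ} (hf : Differentiable ℝ f)
    (hB : ∀ x, |deriv f x| ≤ B) (a b : ℝ) : |f a - f b| ≤ B * |a - b| :=
  convex_univ.norm_image_sub_le_of_norm_deriv_le (fun x _ => hf x) (fun x _ => hB x)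
    (mem_univ b) (mem_univ a)

namespace MemW

variable {f : ℝ → ℝ}

theorem abs_iteratedDeriv_le_WNorm {k j : ℕ} (hf : MemW k f) (hj : j ≤ k) (x : ℝ) :
    |iteratedDeriv j f x| ≤ WNorm k f := by
  have hbdd : ∀ i ≤ k, BddAbove (range fun x => |iteratedDeriv i f x|) := fun i hi => by
    obtain ⟨C, hC⟩ := hf.2 i hi
    exact ⟨C, forall_mem_range.2 hC⟩
  refine (le_ciSup (hbdd j hj) x).trans (Finset.single_le_sum
    (f := fun i => ⨆ y, |iteratedDeriv i f y|) (fun i hi => ?_) (Finset.mem_range_succ_iff.2 hj))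
  exact (abs_nonneg _).trans (le_ciSup (hbdd i (Finset.mem_range_succ_iff.1 hi)) 0)

theorem abs_le_WNorm (hf : MemW 2 f) (x : ℝ) : |f x| ≤ WNorm 2 f := by
  simpa using hf.abs_iteratedDeriv_le_WNorm (Nat.zero_le 2) x

theorem WNorm_nonneg (hf : MemW 2 f) : 0 ≤ WNorm 2 f :=
  (abs_nonneg _).trans (hf.abs_le_WNorm 0)

theorem abs_deriv_le_WNorm (hf : MemW 2 f) (x : ℝ) : |deriv f x| ≤ WNorm 2 f := by
  simpa using hf.abs_iteratedDeriv_le_WNorm one_le_two x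

theorem differentiable (hf : MemW 2 f) : Differentiable ℝ f :=
  hf.1.differentiable two_ne_zero

theorem differentiable_deriv (hf : MemW 2 f) : Differentiable ℝ (deriv f) :=
  (contDiff_succ_iff_deriv.1 (show ContDiff ℝ (1 + 1) f from hf.1)).2.2.differentiable
    one_ne_zero

theorem abs_deriv_sub_deriv_le (hf : MemW 2 f) (a b : ℝ) :
    |deriv f a - deriv f b| ≤ WNorm 2 f * |a - b| :=
  abs_sub_le_of_abs_deriv_le hf.differentiable_deriv
    (fun x => by simpa [iteratedDeriv_succ] using hf.abs_iteratedDeriv_le_WNorm le_rfl x) a b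

theorem abs_increment_sub_le (hf : MemW 2 f) (h a b : ℝ) :
    |(f (a + h) - f a) - (f (b + h) - f b)| ≤ WNorm 2 f * |h| * |a - b| := by
  have hdiff : ∀ x, HasDerivAt (fun y => f (y + h) - f y) (deriv f (x + h) - deriv f x) x :=
    fun x => ((hf.differentiable _).hasDerivAt.comp_add_const x h).sub
      (hf.differentiable x).hasDerivAt
  refine abs_sub_le_of_abs_deriv_le (fun x => (hdiff x).differentiableAt) (fun x => ?_) a b
  rw [(hdiff x).deriv]
  simpa using hf.abs_deriv_sub_deriv_le (x + h) x

end MemW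

def duhamel (f xc : ℝ → ℝ) (t x : ℝ) : ℝ :=
  ∫ τ in (0 : ℝ)..t, exp (-(t - τ)) * heatConv (t - τ) f (x - xc τ)

section duhamel

variable {f xc xc₁ xc₂ : ℝ → ℝ} {C t : ℝ}

theorem norm_exp_neg_sub_mul_le {τ y : ℝ} (hτ : τ ≤ t) (hy : |y| ≤ C) :
    ‖exp (-(t - τ)) * y‖ ≤ C := by
  rw [norm_mul, Real.norm_of_nonneg (exp_pos _).le, Real.norm_eq_abs]
  exact (mul_le_of_le_one_left (abs_nonneg y) (exp_le_one_iff.2 (by linarith))).trans hy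

theorem intervalIntegrable_duhamel (hf : Measurable f) (hC : ∀ x, |f x| ≤ C) (ht : 0 ≤ t)
    (hxc : ContinuousOn xc (Icc 0 t)) (x : ℝ) :
    IntervalIntegrable (fun τ => exp (-(t - τ)) * heatConv (t - τ) f (x - xc τ)) volume 0 t := by
  refine (intervalIntegrable_const (c := C)).mono_fun' ?_ ?_ <;> rw [uIoc_of_le ht]
  · have hxc' := (hxc.mono Ioc_subset_Icc_self).aemeasurable (μ := volume) measurableSet_Ioc
    exact (by fun_prop : Continuous fun τ => exp (-(t - τ))).aestronglyMeasurable.mul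
      ((measurable_heatConv hf).comp_aemeasurable
        ((measurable_const.sub measurable_id).aemeasurable.prodMk
          (aemeasurable_const.sub hxc'))).aestronglyMeasurable
  · exact ae_restrict_of_forall_mem measurableSet_Ioc fun τ hτ =>
      norm_exp_neg_sub_mul_le hτ.2 (abs_heatConv_le hC _ _)

theorem duhamel_add_sub (hf : Measurable f) (hC : ∀ x, |f x| ≤ C) (ht : 0 ≤ t)
    (hxc : ContinuousOn xc (Icc 0 t)) (x h : ℝ) :
    duhamel f xc t (x + h) - duhamel f xc t x = duhamel (fun y => f (y + h) - f y) xc t x := by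
  rw [duhamel, duhamel, ← intervalIntegral.integral_sub (intervalIntegrable_duhamel hf hC ht hxc _)
    (intervalIntegrable_duhamel hf hC ht hxc _)]
  refine intervalIntegral.integral_congr fun τ _ => ?_
  simp only [← mul_sub, ← heatConv_add_sub hf hC, add_sub_right_comm]

theorem abs_duhamel_sub_le (hf : Measurable f) (hC : ∀ x, |f x| ≤ C) {K : ℝ}
    (hK : ∀ a b, |f a - f b| ≤ K * |a - b|) (ht : 0 ≤ t) (hxc₁ : ContinuousOn xc₁ (Icc 0 t))
    (hxc₂ : ContinuousOn xc₂ (Icc 0 t)) (x : ℝ) :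
    |duhamel f xc₁ t x - duhamel f xc₂ t x| ≤ K * ∫ τ in (0 : ℝ)..t, |xc₁ τ - xc₂ τ| := by
  rw [duhamel, duhamel, ← intervalIntegral.integral_sub (intervalIntegrable_duhamel hf hC ht hxc₁ _)
    (intervalIntegrable_duhamel hf hC ht hxc₂ _), ← intervalIntegral.integral_const_mul,
    ← Real.norm_eq_abs]
  refine intervalIntegral.norm_integral_le_of_norm_le ht (ae_of_all _ fun τ hτ => ?_)
    (((hxc₁.sub hxc₂).abs.const_smul K).intervalIntegrable_of_Icc ht)
  rw [← mul_sub]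
  refine norm_exp_neg_sub_mul_le hτ.2 ((abs_heatConv_sub_le hf hC hK _ _ _).trans_eq ?_)
  rw [sub_sub_sub_cancel_left, abs_sub_comm]

end duhamel

theorem abs_deriv_sub_deriv_le_of_sub_eq_duhamel {g xc₁ xc₂ u₁ u₂ : ℝ → ℝ} {t x : ℝ}
    (hg : MemW 2 g) (ht : 0 ≤ t) (hxc₁ : ContinuousOn xc₁ (Icc 0 t))
    (hxc₂ : ContinuousOn xc₂ (Icc 0 t)) (hu₁ : DifferentiableAt ℝ u₁ x)
    (hu₂ : DifferentiableAt ℝ u₂ x)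
    (hu : ∀ y, u₁ y - u₂ y = duhamel g xc₁ t y - duhamel g xc₂ t y) :
    |deriv u₁ x - deriv u₂ x| ≤ WNorm 2 g * ∫ τ in (0 : ℝ)..t, |xc₁ τ - xc₂ τ| := by
  have hgm : Measurable g := hg.1.continuous.measurable
  have hint : 0 ≤ ∫ τ in (0 : ℝ)..t, |xc₁ τ - xc₂ τ| :=
    intervalIntegral.integral_nonneg ht fun τ _ => abs_nonneg _
  rw [← Real.norm_eq_abs]
  refine (hu₁.hasDerivAt.sub hu₂.hasDerivAt).le_of_lip' (mul_nonneg hg.WNorm_nonneg hint)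
    (Eventually.of_forall fun y => ?_)
  obtain ⟨h, rfl⟩ : ∃ h, y = x + h := ⟨y - x, by ring⟩
  have hinc : (u₁ - u₂) (x + h) - (u₁ - u₂) x = duhamel (fun y => g (y + h) - g y) xc₁ t x -
      duhamel (fun y => g (y + h) - g y) xc₂ t x := by
    simp only [Pi.sub_apply, hu, ← duhamel_add_sub hgm hg.abs_le_WNorm ht hxc₁,
      ← duhamel_add_sub hgm hg.abs_le_WNorm ht hxc₂]
    ring
  have hbound : ∀ y, |g (y + h) - g y| ≤ 2 * WNorm 2 g := fun y =>
    (abs_sub _ _).trans (by linarith [hg.abs_le_WNorm (y + h), hg.abs_le_WNorm y])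
  rw [hinc, add_sub_cancel_left, Real.norm_eq_abs, Real.norm_eq_abs, mul_right_comm]
  exact abs_duhamel_sub_le ((hgm.comp (measurable_add_const h)).sub hgm) hbound
    (hg.abs_increment_sub_le h) ht hxc₁ hxc₂ x

theorem intervalIntegrable_deriv_comp {s : ℝ → ℝ → ℝ} {xc : ℝ → ℝ} {M t : ℝ}
    (hs : ContinuousOn (fun p : ℝ × ℝ => s p.1 p.2) (Ici 0 ×ˢ univ))
    (hxc : ContinuousOn xc (Ici 0)) (hM : ∀ τ ≥ (0 : ℝ), ∀ x, |deriv (s τ) x| ≤ M) (ht : 0 ≤ t) :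
    IntervalIntegrable (fun τ => deriv (s τ) (xc τ)) volume 0 t := by
  have hmax : Continuous fun τ : ℝ => max τ 0 := by fun_prop
  have hmax_mem : ∀ τ : ℝ, max τ 0 ∈ Ici (0 : ℝ) := fun τ => le_max_right τ 0
  -- `measurable_deriv_with_param` needs continuity on all of `ℝ × ℝ`; precompose with `max · 0`
  have hs' : Continuous (Function.uncurry fun τ => s (max τ 0)) :=
    hs.comp_continuous ((hmax.comp continuous_fst).prodMk continuous_snd)
      fun p => ⟨hmax_mem p.1, mem_univ _⟩
  have hm : Measurable fun τ => deriv (s (max τ 0)) (xc (max τ 0)) :=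
    (measurable_deriv_with_param hs').comp
      (measurable_id.prodMk (hxc.comp_continuous hmax hmax_mem).measurable)
  refine (intervalIntegrable_const (c := M)).mono_fun' ?_ ?_ <;> rw [uIoc_of_le ht]
  · refine hm.aestronglyMeasurable.congr
      (ae_restrict_of_forall_mem measurableSet_Ioc fun τ hτ => ?_)
    simp only [max_eq_left hτ.1.le]
  · exact ae_restrict_of_forall_mem measurableSet_Ioc fun τ hτ => hM τ hτ.1.le _

theorem eq_zero_of_le_mul_integral {φ : ℝ → ℝ} {a b K : ℝ} (hφ : ContinuousOn φ (Icc a b))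
    (hφ₀ : ∀ u ∈ Icc a b, 0 ≤ φ u) (h : ∀ u ∈ Icc a b, φ u ≤ K * ∫ τ in a..u, φ τ) :
    ∀ u ∈ Icc a b, φ u = 0 := by
  intro u hu
  have hab : a ≤ b := hu.1.trans hu.2
  set ψ : ℝ → ℝ := fun τ => φ (projIcc a b hab τ)
  have hψ : Continuous ψ :=
    hφ.comp_continuous (continuous_subtype_val.comp continuous_projIcc) fun τ => Subtype.prop _
  have hψφ : ∀ u ∈ Icc a b, ∫ τ in a..u, ψ τ = ∫ τ in a..u, φ τ := fun u hu =>
    intervalIntegral.integral_congr fun τ hτ => by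
      rw [uIcc_of_le hu.1] at hτ
      simp only [ψ, projIcc_of_mem hab ⟨hτ.1, hτ.2.trans hu.2⟩]
  have hF : ∀ u ∈ Icc a b, ‖∫ τ in a..u, ψ τ‖ ≤ gronwallBound 0 |K| 0 (u - a) := by
    refine norm_le_gronwallBound_of_norm_deriv_right_le (f' := ψ)
      (fun u _ => (hψ.integral_hasStrictDerivAt a u).hasDerivAt.continuousAt.continuousWithinAt)
      (fun u _ => (hψ.integral_hasStrictDerivAt a u).hasDerivAt.hasDerivWithinAt) (by simp)
      fun u hu => ?_
    have hu' : u ∈ Icc a b := Ico_subset_Icc_self hu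
    rw [Real.norm_eq_abs, Real.norm_eq_abs, hψφ u hu', add_zero, ← abs_mul]
    simp only [ψ, projIcc_of_mem hab hu', abs_of_nonneg (hφ₀ u hu')]
    exact (h u hu').trans (le_abs_self _)
  have hF₀ : ∫ τ in a..u, φ τ = 0 := by
    simpa [gronwallBound_ε0_δ0, hψφ u hu] using hF u hu
  exact le_antisymm ((h u hu).trans_eq (by rw [hF₀, mul_zero])) (hφ₀ u hu)

theorem abs_sub_le_mul_integral_of_eq_sub_integral {x₁ x₂ A₁ A₂ : ℝ → ℝ} {x₀ η M C T : ℝ}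
    (hC : 0 ≤ C) (hx₁ : ∀ t ≥ (0 : ℝ), x₁ t = x₀ - η * ∫ τ in (0 : ℝ)..t, A₁ τ)
    (hx₂ : ∀ t ≥ (0 : ℝ), x₂ t = x₀ - η * ∫ τ in (0 : ℝ)..t, A₂ τ)
    (hA₁ : ∀ t ≥ (0 : ℝ), IntervalIntegrable A₁ volume 0 t)
    (hA₂ : ∀ t ≥ (0 : ℝ), IntervalIntegrable A₂ volume 0 t)
    (hδ : ContinuousOn (fun τ => |x₁ τ - x₂ τ|) (Icc 0 T))
    (hA : ∀ τ > (0 : ℝ),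
      |A₁ τ - A₂ τ| ≤ M * |x₁ τ - x₂ τ| + C * ∫ σ in (0 : ℝ)..τ, |x₁ σ - x₂ σ|) :
    ∀ u ∈ Icc 0 T, |x₁ u - x₂ u| ≤ |η| * (M + C * T) * ∫ τ in (0 : ℝ)..u, |x₁ τ - x₂ τ| := by
  intro u hu
  set I := ∫ τ in (0 : ℝ)..u, |x₁ τ - x₂ τ|
  have hδu : IntervalIntegrable (fun τ => |x₁ τ - x₂ τ|) volume 0 u :=
    (hδ.mono (Icc_subset_Icc_right hu.2)).intervalIntegrable_of_Icc hu.1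
  have hI : 0 ≤ I := intervalIntegral.integral_nonneg hu.1 fun τ _ => abs_nonneg _
  have hmono : ∀ τ ∈ Ioc 0 u, ∫ σ in (0 : ℝ)..τ, |x₁ σ - x₂ σ| ≤ I := fun τ hτ =>
    intervalIntegral.integral_mono_interval le_rfl hτ.1.le hτ.2
      (ae_of_all _ fun σ => abs_nonneg _) hδu
  calc |x₁ u - x₂ u| = |η| * ‖∫ τ in (0 : ℝ)..u, (A₁ τ - A₂ τ)‖ := by
        rw [hx₁ u hu.1, hx₂ u hu.1, intervalIntegral.integral_sub (hA₁ u hu.1) (hA₂ u hu.1),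
          Real.norm_eq_abs, ← abs_mul, ← abs_neg]
        ring_nf
    _ ≤ |η| * ∫ τ in (0 : ℝ)..u, (M * |x₁ τ - x₂ τ| + C * I) := by
        gcongr
        exact intervalIntegral.norm_integral_le_of_norm_le hu.1
          (ae_of_all _ fun τ hτ => (hA τ hτ.1).trans (by gcongr; exact hmono τ hτ))
          ((hδu.const_mul M).add intervalIntegrable_const)
    _ = |η| * (M + C * u) * I := by
        rw [intervalIntegral.integral_add (hδu.const_mul M) intervalIntegrable_const,
          intervalIntegral.integral_const_mul, intervalIntegral.integral_const, smul_eq_mul]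
        ring
    _ ≤ |η| * (M + C * T) * I := by gcongr; exact hu.2

theorem eq_of_eq_sub_integral {x₁ x₂ A₁ A₂ : ℝ → ℝ} {x₀ η M C : ℝ} (hC : 0 ≤ C)
    (hx₁ : ∀ t ≥ (0 : ℝ), x₁ t = x₀ - η * ∫ τ in (0 : ℝ)..t, A₁ τ)
    (hx₂ : ∀ t ≥ (0 : ℝ), x₂ t = x₀ - η * ∫ τ in (0 : ℝ)..t, A₂ τ)
    (hA₁ : ∀ t ≥ (0 : ℝ), IntervalIntegrable A₁ volume 0 t)
    (hA₂ : ∀ t ≥ (0 : ℝ), IntervalIntegrable A₂ volume 0 t)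
    (hx₁c : ContinuousOn x₁ (Ici 0)) (hx₂c : ContinuousOn x₂ (Ici 0))
    (hA : ∀ τ > (0 : ℝ),
      |A₁ τ - A₂ τ| ≤ M * |x₁ τ - x₂ τ| + C * ∫ σ in (0 : ℝ)..τ, |x₁ σ - x₂ σ|) :
    ∀ t ≥ (0 : ℝ), x₁ t = x₂ t := by
  intro t ht
  have hδ : ContinuousOn (fun τ => |x₁ τ - x₂ τ|) (Icc 0 t) :=
    ((hx₁c.sub hx₂c).abs).mono Icc_subset_Ici_self
  have hgap := abs_sub_le_mul_integral_of_eq_sub_integral hC hx₁ hx₂ hA₁ hA₂ hδ hA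
  have := eq_zero_of_le_mul_integral hδ (fun _ _ => abs_nonneg _) hgap t ⟨ht, le_rfl⟩
  exact sub_eq_zero.1 (abs_eq_zero.1 this)

theorem mild_solution_unique_general
    (η : ℝ)
    (g : ℝ → ℝ) (hg : MemW 2 g)
    (s₀ : ℝ → ℝ)
    (x₀ : ℝ) (M₂ : ℝ)
    (s₁ s₂ : ℝ → ℝ → ℝ) (xc₁ xc₂ : ℝ → ℝ)
    (hs₁cont : ContinuousOn (fun p : ℝ × ℝ => s₁ p.1 p.2) (Set.Ici 0 ×ˢ Set.univ))
    (hs₂cont : ContinuousOn (fun p : ℝ × ℝ => s₂ p.1 p.2) (Set.Ici 0 ×ˢ Set.univ))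
    (hxc₁cont : ContinuousOn xc₁ (Set.Ici 0))
    (hxc₂cont : ContinuousOn xc₂ (Set.Ici 0))
    (hb₁ : ∀ t ≥ (0 : ℝ), MemW 2 (s₁ t) ∧ WNorm 2 (s₁ t) ≤ M₂)
    (hb₂ : ∀ t ≥ (0 : ℝ), MemW 2 (s₂ t) ∧ WNorm 2 (s₂ t) ≤ M₂)
    (hxc₁ : ∀ t ≥ (0 : ℝ), xc₁ t = x₀ - η * ∫ τ in (0 : ℝ)..t, deriv (s₁ τ) (xc₁ τ))
    (hxc₂ : ∀ t ≥ (0 : ℝ), xc₂ t = x₀ - η * ∫ τ in (0 : ℝ)..t, deriv (s₂ τ) (xc₂ τ))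
    (hini₁ : ∀ x, s₁ 0 x = s₀ x) (hini₂ : ∀ x, s₂ 0 x = s₀ x)
    (hmild₁ : ∀ t > (0 : ℝ), ∀ x : ℝ,
      s₁ t x = Real.exp (-t) * heatConv t s₀ x +
        ∫ τ in (0 : ℝ)..t, Real.exp (-(t - τ)) * heatConv (t - τ) g (x - xc₁ τ))
    (hmild₂ : ∀ t > (0 : ℝ), ∀ x : ℝ,
      s₂ t x = Real.exp (-t) * heatConv t s₀ x +
        ∫ τ in (0 : ℝ)..t, Real.exp (-(t - τ)) * heatConv (t - τ) g (x - xc₂ τ)) :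
    (∀ t ≥ (0 : ℝ), ∀ x : ℝ, s₁ t x = s₂ t x) ∧ (∀ t ≥ (0 : ℝ), xc₁ t = xc₂ t) := by
  have hderiv : ∀ t > (0 : ℝ), ∀ x, |deriv (s₁ t) x - deriv (s₂ t) x| ≤
      WNorm 2 g * ∫ τ in (0 : ℝ)..t, |xc₁ τ - xc₂ τ| := fun t ht x =>
    abs_deriv_sub_deriv_le_of_sub_eq_duhamel hg ht.le (hxc₁cont.mono Icc_subset_Ici_self)
      (hxc₂cont.mono Icc_subset_Ici_self) ((hb₁ t ht.le).1.differentiable x)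
      ((hb₂ t ht.le).1.differentiable x) fun y => by
        rw [hmild₁ t ht y, hmild₂ t ht y, duhamel, duhamel]; ring
  have hA : ∀ τ > (0 : ℝ), |deriv (s₁ τ) (xc₁ τ) - deriv (s₂ τ) (xc₂ τ)| ≤
      M₂ * |xc₁ τ - xc₂ τ| + WNorm 2 g * ∫ σ in (0 : ℝ)..τ, |xc₁ σ - xc₂ σ| := fun τ hτ =>
    (abs_sub_le _ (deriv (s₁ τ) (xc₂ τ)) _).trans <| add_le_add
      (((hb₁ τ hτ.le).1.abs_deriv_sub_deriv_le _ _).trans (by gcongr; exact (hb₁ τ hτ.le).2))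
      (hderiv τ hτ _)
  have hxc : ∀ t ≥ (0 : ℝ), xc₁ t = xc₂ t :=
    eq_of_eq_sub_integral hg.WNorm_nonneg hxc₁ hxc₂
      (fun _ => intervalIntegrable_deriv_comp hs₁cont hxc₁cont
        fun τ hτ x => ((hb₁ τ hτ).1.abs_deriv_le_WNorm x).trans (hb₁ τ hτ).2)
      (fun _ => intervalIntegrable_deriv_comp hs₂cont hxc₂cont
        fun τ hτ x => ((hb₂ τ hτ).1.abs_deriv_le_WNorm x).trans (hb₂ τ hτ).2)
      hxc₁cont hxc₂cont hA
  refine ⟨fun t ht x => ?_, hxc⟩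
  rcases ht.eq_or_lt with rfl | ht
  · rw [hini₁, hini₂]
  rw [hmild₁ t ht x, hmild₂ t ht x]
  congr 1
  refine intervalIntegral.integral_congr fun τ hτ => ?_
  rw [hxc τ (uIcc_of_le ht.le ▸ hτ).1]

/-- uniqueness of mild solutions of the rescaled model. Two pairs
`(sᵢ, x_{c,i})`, continuous, with `sup_t ‖sᵢ(t,·)‖_{W^{2,∞}} ≤ M₂`, both satisfying
the mild (Duhamel) integral equations with the same data `(s₀, x₀)`, coincide. -/
theorem mild_solution_unique
    (η : ℝ) (hη : 0 < η)
    (g : ℝ → ℝ) (hg : MemW 2 g)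
    (s₀ : ℝ → ℝ) (hs₀ : MemW 2 s₀)
    (x₀ : ℝ) (M₂ : ℝ) (hM₂ : 0 < M₂)
    (s₁ s₂ : ℝ → ℝ → ℝ) (xc₁ xc₂ : ℝ → ℝ)
    (hs₁cont : ContinuousOn (fun p : ℝ × ℝ => s₁ p.1 p.2) (Set.Ici 0 ×ˢ Set.univ))
    (hs₂cont : ContinuousOn (fun p : ℝ × ℝ => s₂ p.1 p.2) (Set.Ici 0 ×ˢ Set.univ))
    (hxc₁cont : ContinuousOn xc₁ (Set.Ici 0))
    (hxc₂cont : ContinuousOn xc₂ (Set.Ici 0))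
    (hb₁ : ∀ t ≥ (0 : ℝ), MemW 2 (s₁ t) ∧ WNorm 2 (s₁ t) ≤ M₂)
    (hb₂ : ∀ t ≥ (0 : ℝ), MemW 2 (s₂ t) ∧ WNorm 2 (s₂ t) ≤ M₂)
    (hxc₁ : ∀ t ≥ (0 : ℝ), xc₁ t = x₀ - η * ∫ τ in (0 : ℝ)..t, deriv (s₁ τ) (xc₁ τ))
    (hxc₂ : ∀ t ≥ (0 : ℝ), xc₂ t = x₀ - η * ∫ τ in (0 : ℝ)..t, deriv (s₂ τ) (xc₂ τ))
    (hini₁ : ∀ x, s₁ 0 x = s₀ x) (hini₂ : ∀ x, s₂ 0 x = s₀ x)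
    (hmild₁ : ∀ t > (0 : ℝ), ∀ x : ℝ,
      s₁ t x = Real.exp (-t) * heatConv t s₀ x +
        ∫ τ in (0 : ℝ)..t, Real.exp (-(t - τ)) * heatConv (t - τ) g (x - xc₁ τ))
    (hmild₂ : ∀ t > (0 : ℝ), ∀ x : ℝ,
      s₂ t x = Real.exp (-t) * heatConv t s₀ x +
        ∫ τ in (0 : ℝ)..t, Real.exp (-(t - τ)) * heatConv (t - τ) g (x - xc₂ τ)) :
    (∀ t ≥ (0 : ℝ), ∀ x : ℝ, s₁ t x = s₂ t x) ∧ (∀ t ≥ (0 : ℝ), xc₁ t = xc₂ t) :=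
  mild_solution_unique_general η g hg s₀ x₀ M₂ s₁ s₂ xc₁ xc₂ hs₁cont hs₂cont hxc₁cont hxc₂cont hb₁
    hb₂ hxc₁ hxc₂ hini₁ hini₂ hmild₁ hmild₂
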